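/- (FKG inequality for monotone renewal) Assume the parameters (q_i)_{i≥0} are nondecreasing and let α_i ∈ [0,1] for all i. Then for every n ≥ 1, E[∏_{i=0}^{n−1} α_i^{ξ_{i+1}}] ≥ ∏_{i=0}^{n−1} E[α_i^{ξ_{i+1}}] = ∏_{i=0}^{n−1} (1 − P(ξ_{i+1}=1)(1 − α_i)). -/

import Mathlib

open MeasureTheory ProbabilityTheory Filter Set
open scoped ENNReal Classical

noncomputable section

namespace RenewalPerc

variable {Ω : Type*} [MeasurableSpace Ω]

/-- The undelayed renewal sequence `ξ` built from the inter-arrival times `T`: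
`ξ_i = 1` iff `i` is a renewal time, i.e. iff some partial sum of the
inter-arrival times equals `i`. -/
def xi (T : ℕ → Ω → ℕ∞) (i : ℕ) (ω : Ω) : ℕ :=
  if ∃ j : ℕ, (∑ l ∈ Finset.range j, T l ω) = (i : ℕ∞) then 1 else 0

/-- The expectation `E T` of the inter-arrival time, in `ℝ≥0∞`. -/
def ET (P : Measure Ω) (T : ℕ → Ω → ℕ∞) : ℝ≥0∞ :=
  ∫⁻ ω, (T 0 ω : ℝ≥0∞) ∂P

/-- `α_n = P(R ≤ n)`, as an extended nonnegative real. -/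
def alphaE (P : Measure Ω) (R : ℕ → Ω → ℕ) (n : ℕ) : ℝ≥0∞ :=
  P {ω | R 0 ω ≤ n}

/-- `α_n = P(R ≤ n)`, as a real number. -/
def alphaR (P : Measure Ω) (R : ℕ → Ω → ℕ) (n : ℕ) : ℝ :=
  (alphaE P R n).toReal

/-- `P(ξ_i = 1)`, as a real number. -/
def pxi (P : Measure Ω) (T : ℕ → Ω → ℕ∞) (i : ℕ) : ℝ :=
  (P {ω | xi T i ω = 1}).toReal

/-- The random interval `C_l = {l+1, …, l+R_l}` if `ξ_l = 1` (empty if `R_l = 0`),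
and `C_l = ∅` otherwise. -/
def cover (T : ℕ → Ω → ℕ∞) (R : ℕ → Ω → ℕ) (l : ℕ) (ω : Ω) : Set ℕ :=
  if xi T l ω = 1 then Set.Ioc l (l + R l ω) else ∅

/-- The connectivity relation `i ↔ j`. -/
def connects (T : ℕ → Ω → ℕ∞) (R : ℕ → Ω → ℕ) (i j : ℕ) (ω : Ω) : Prop :=
  xi T i ω = 1 ∧ xi T j ω = 1 ∧
    ∃ m n, m ≤ n ∧ n < j ∧ Set.Icc i j ⊆ ⋃ l ∈ Set.Icc m n, cover T R l ω

/-- The percolation event `A = ⋂_{i ≥ 1} ⋃_{j ≥ i} {0 ↔ j}`. -/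
def percSet (T : ℕ → Ω → ℕ∞) (R : ℕ → Ω → ℕ) : Set Ω :=
  ⋂ i ∈ {i : ℕ | 1 ≤ i}, ⋃ j ∈ {j : ℕ | i ≤ j}, {ω | connects T R 0 j ω}

/-- `B_n`: the sets of newly informed individuals of the dual (reverse firework)
process. -/
def Bset (T : ℕ → Ω → ℕ∞) (R : ℕ → Ω → ℕ) : ℕ → Ω → Set ℕ
  | 0 => fun _ => {0}
  | n + 1 => fun ω =>
      {i | xi T i ω = 1 ∧ (Set.Ico (i - R i ω) i ∩ Bset T R n ω).Nonempty ∧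
        ∀ m, m ≤ n → i ∉ Bset T R m ω}

/-- The dual process `Y`: `Y_i = 1` iff site `i` is eventually informed. -/
def Ydual (T : ℕ → Ω → ℕ∞) (R : ℕ → Ω → ℕ) (i : ℕ) (ω : Ω) : ℕ :=
  if ∃ n, i ∈ Bset T R n ω then 1 else 0

/-- The successive positions of the `1`'s of the dual process `Y`
(taking the value `∞` once there are no more `1`'s). -/
def renewalY (T : ℕ → Ω → ℕ∞) (R : ℕ → Ω → ℕ) : ℕ → Ω → ℕ∞
  | 0 => fun _ => 0
  | j + 1 => fun ω =>
      sInf {x : ℕ∞ | renewalY T R j ω < x ∧ ∃ i : ℕ, x = (i : ℕ∞) ∧ Ydual T R i ω = 1}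

/-- The gaps between successive `1`'s of the dual process `Y`. -/
def gapY (T : ℕ → Ω → ℕ∞) (R : ℕ → Ω → ℕ) (j : ℕ) (ω : Ω) : ℕ∞ :=
  renewalY T R (j + 1) ω - renewalY T R j ω

/-- `q_i^* = max_{n ≤ i} q_n`. -/
def qstar (q : ℕ → ℝ) (i : ℕ) : ℝ :=
  (Finset.range (i + 1)).sup' Finset.nonempty_range_add_one q

/-- `C_k = (∑_{j=1}^k ∏_{i=k}^{k+j-1} q_i^*)^2`. -/
def Cseq (q : ℕ → ℝ) (k : ℕ) : ℝ :=
  (∑ j ∈ Finset.Icc 1 k, ∏ i ∈ Finset.range j, qstar q (k + i)) ^ 2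

/-- The coupled house-of-cards chains, all driven by the same uniform
variables `U`, started at `n`. -/
def hoc (q : ℕ → ℝ) (U : ℕ → Ω → ℝ) (n : ℕ) : ℕ → Ω → ℕ
  | 0 => fun _ => n
  | l + 1 => fun ω => if U (l + 1) ω ≤ q (hoc q U n l ω) then hoc q U n l ω + 1 else 0

/-- The merging time `T_k = inf{l ≥ 1 : ζ^{(n)}_l = 0 for all n = 0,…,k}`. -/
def mergeT (q : ℕ → ℝ) (U : ℕ → Ω → ℝ) (k : ℕ) (ω : Ω) : ℕ∞ :=
  sInf {x : ℕ∞ | ∃ l : ℕ, x = (l : ℕ∞) ∧ 1 ≤ l ∧ ∀ n, n ≤ k → hoc q U n l ω = 0}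

/-!
The age `A_j` of the renewal sequence at time `j` (time since the last renewal) is a Markov chain
on `ℕ` which moves from `a` to `a + 1` with probability `q a` and to `0` otherwise, and
`ξ_j = 1` exactly when `A_j = 0`. Conditioning on the first inter-arrival time identifies
`E[∏ γ_j ^ ξ_{j+1}]` with the corresponding expectation `ageMean` for this chain. When `q` is
nondecreasing the chain is stochastically monotone, so `a ↦ ageMean q n a γ` is nondecreasing
for `γ` with values in `[0,1]`; a one-step Chebyshev inequality then yields the Harris inequality
`ageMean γ * ageMean δ ≤ ageMean (γ * δ)` by induction on `n`. The FKG inequality follows by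
writing `α` as the product of its single-site factors.
-/

/-- `ageMean q n a γ = E[∏_{j<n} γ_j ^ 1{A_{j+1} = 0}]` for the age chain `A` started at
`A_0 = a`, which moves from age `b` to `b + 1` with probability `q b` and to `0` otherwise. -/
def ageMean (q : ℕ → ℝ) : ℕ → ℕ → (ℕ → ℝ) → ℝ
  | 0, _, _ => 1
  | n + 1, a, γ => q a * ageMean q n (a + 1) (fun j => γ (j + 1)) +
      (1 - q a) * (γ 0 * ageMean q n 0 (fun j => γ (j + 1)))

section ageMean

variable {q : ℕ → ℝ}

@[simp]
lemma ageMean_one (n a : ℕ) : ageMean q n a 1 = 1 := by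
  induction n generalizing a with
  | zero => rfl
  | succ n ih =>
    show q a * ageMean q n (a + 1) 1 + (1 - q a) * (1 * ageMean q n 0 1) = 1
    rw [ih, ih]; ring

/-- Decomposition according to the first renewal time `t + 1`. -/
lemma ageMean_eq_sum (n a : ℕ) (γ : ℕ → ℝ) :
    ageMean q n a γ = ∑ t ∈ Finset.range n, (1 - q (a + t)) * (∏ i ∈ Finset.range t, q (a + i)) *
        (γ t * ageMean q (n - (t + 1)) 0 (fun j => γ (j + t + 1))) +
      ∏ i ∈ Finset.range n, q (a + i) := by
  induction n generalizing a γ with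
  | zero => simp [ageMean]
  | succ n ih =>
    rw [ageMean, ih, Finset.sum_range_succ', Finset.prod_range_succ', mul_add, Finset.mul_sum]
    have hidx : ∀ t, a + 1 + t = a + (t + 1) := fun t => by omega
    simp only [Nat.add_sub_add_right, Nat.add_sub_cancel]
    simp only [Finset.prod_range_succ', hidx, add_assoc, add_zero, Finset.prod_range_zero]
    ring_nf

variable (hq₀ : ∀ i, 0 ≤ q i) (hq₁ : ∀ i, q i ≤ 1)
include hq₀ hq₁

lemma ageMean_nonneg {γ : ℕ → ℝ} (hγ : ∀ j, 0 ≤ γ j) (n a : ℕ) : 0 ≤ ageMean q n a γ := by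
  induction n generalizing a γ with
  | zero => exact zero_le_one
  | succ n ih =>
    have ih' := ih (fun j => hγ (j + 1))
    exact add_nonneg (mul_nonneg (hq₀ a) (ih' _))
      (mul_nonneg (sub_nonneg.2 (hq₁ a)) (mul_nonneg (hγ 0) (ih' _)))

variable (hq : Monotone q)
include hq

lemma ageMean_mono {γ : ℕ → ℝ} (hγ₀ : ∀ j, 0 ≤ γ j) (hγ₁ : ∀ j, γ j ≤ 1) (n : ℕ) :
    Monotone (fun a => ageMean q n a γ) := by
  induction n generalizing γ with
  | zero => exact fun _ _ _ => le_rfl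
  | succ n ih =>
    intro a b hab
    set x := fun a => ageMean q n a (fun j => γ (j + 1))
    have hx : Monotone x := ih (fun j => hγ₀ (j + 1)) (fun j => hγ₁ (j + 1))
    have hc : γ 0 * x 0 ≤ x (a + 1) :=
      (mul_le_of_le_one_left (ageMean_nonneg hq₀ hq₁ (fun j => hγ₀ (j + 1)) n 0) (hγ₁ 0)).trans
        (hx (Nat.zero_le _))
    have key := mul_le_mul (hq hab) (sub_le_sub_right (hx (Nat.succ_le_succ hab)) (γ 0 * x 0))
      (sub_nonneg.2 hc) (hq₀ b)
    show q a * x (a + 1) + (1 - q a) * (γ 0 * x 0) ≤ q b * x (b + 1) + (1 - q b) * (γ 0 * x 0)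
    linarith

lemma ageMean_mul_ageMean_le {γ δ : ℕ → ℝ} (hγ₀ : ∀ j, 0 ≤ γ j) (hγ₁ : ∀ j, γ j ≤ 1)
    (hδ₀ : ∀ j, 0 ≤ δ j) (hδ₁ : ∀ j, δ j ≤ 1) (n a : ℕ) :
    ageMean q n a γ * ageMean q n a δ ≤ ageMean q n a (γ * δ) := by
  induction n generalizing a γ δ with
  | zero => simp [ageMean]
  | succ n ih =>
    set x := fun a => ageMean q n a (fun j => γ (j + 1))
    set y := fun a => ageMean q n a (fun j => δ (j + 1))
    have hxy : ∀ b, x b * y b ≤ ageMean q n b (fun j => (γ * δ) (j + 1)) := fun b =>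
      ih (fun j => hγ₀ (j + 1)) (fun j => hγ₁ (j + 1)) (fun j => hδ₀ (j + 1))
        (fun j => hδ₁ (j + 1)) b
    have hx : γ 0 * x 0 ≤ x (a + 1) :=
      (mul_le_of_le_one_left (ageMean_nonneg hq₀ hq₁ (fun j => hγ₀ (j + 1)) n 0) (hγ₁ 0)).trans
        (ageMean_mono hq₀ hq₁ hq (fun j => hγ₀ (j + 1)) (fun j => hγ₁ (j + 1)) n (Nat.zero_le _))
    have hy : δ 0 * y 0 ≤ y (a + 1) :=
      (mul_le_of_le_one_left (ageMean_nonneg hq₀ hq₁ (fun j => hδ₀ (j + 1)) n 0) (hδ₁ 0)).trans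
        (ageMean_mono hq₀ hq₁ hq (fun j => hδ₀ (j + 1)) (fun j => hδ₁ (j + 1)) n (Nat.zero_le _))
    -- Chebyshev's inequality for the two-point law of the next age
    have cheb : 0 ≤ q a * (1 - q a) * ((x (a + 1) - γ 0 * x 0) * (y (a + 1) - δ 0 * y 0)) :=
      mul_nonneg (mul_nonneg (hq₀ a) (sub_nonneg.2 (hq₁ a)))
        (mul_nonneg (sub_nonneg.2 hx) (sub_nonneg.2 hy))
    have h₁ := mul_le_mul_of_nonneg_left (hxy (a + 1)) (hq₀ a)
    have h₀ := mul_le_mul_of_nonneg_left (hxy 0)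
      (mul_nonneg (sub_nonneg.2 (hq₁ a)) (mul_nonneg (hγ₀ 0) (hδ₀ 0)))
    show (q a * x (a + 1) + (1 - q a) * (γ 0 * x 0)) * (q a * y (a + 1) + (1 - q a) * (δ 0 * y 0))
      ≤ q a * ageMean q n (a + 1) (fun j => (γ * δ) (j + 1)) +
        (1 - q a) * (γ 0 * δ 0 * ageMean q n 0 (fun j => (γ * δ) (j + 1)))
    linarith

lemma prod_ageMean_le_ageMean_prod {ι : Type*} (s : Finset ι) {γ : ι → ℕ → ℝ}
    (hγ₀ : ∀ i j, 0 ≤ γ i j) (hγ₁ : ∀ i j, γ i j ≤ 1) (n a : ℕ) :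
    ∏ i ∈ s, ageMean q n a (γ i) ≤ ageMean q n a (∏ i ∈ s, γ i) := by
  induction s using Finset.induction_on with
  | empty => simp
  | insert i s hi ih =>
    have hprod₀ : ∀ j, 0 ≤ (∏ k ∈ s, γ k) j := fun j => by
      rw [Finset.prod_apply]; exact Finset.prod_nonneg fun k _ => hγ₀ k j
    have hprod₁ : ∀ j, (∏ k ∈ s, γ k) j ≤ 1 := fun j => by
      rw [Finset.prod_apply]; exact Finset.prod_le_one (fun k _ => hγ₀ k j) fun k _ => hγ₁ k j
    rw [Finset.prod_insert hi, Finset.prod_insert hi]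
    exact (mul_le_mul_of_nonneg_left ih (ageMean_nonneg hq₀ hq₁ (hγ₀ i) n a)).trans
      (ageMean_mul_ageMean_le hq₀ hq₁ hq (hγ₀ i) (hγ₁ i) hprod₀ hprod₁ n a)

end ageMean

lemma prod_mulSingle_pow {ι M : Type*} [DecidableEq ι] [CommMonoid M] {s : Finset ι} {i : ι}
    (hi : i ∈ s) (x : M) (k : ι → ℕ) : ∏ j ∈ s, (Pi.mulSingle i x : ι → M) j ^ k j = x ^ k i := by
  rw [Finset.prod_eq_single_of_mem i hi fun j _ hji => by rw [Pi.mulSingle_eq_of_ne hji, one_pow],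
    Pi.mulSingle_eq_same]

section renewal

omit [MeasurableSpace Ω]

variable {T : ℕ → Ω → ℕ∞} {ω : Ω}

lemma xi_eq_zero_or_one (T : ℕ → Ω → ℕ∞) (i : ℕ) (ω : Ω) : xi T i ω = 0 ∨ xi T i ω = 1 := by
  unfold xi; split_ifs <;> simp

lemma xi_zero : xi T 0 ω = 1 := if_pos ⟨0, by simp⟩

lemma xi_eq_zero_of_lt {i : ℕ} (hi : 0 < i) (h : (i : ℕ∞) < T 0 ω) : xi T i ω = 0 := by
  refine if_neg ?_
  rintro ⟨_ | j, hj⟩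
  · exact hi.ne (by simpa [eq_comm] using hj)
  · rw [Finset.sum_range_succ'] at hj
    exact (hj ▸ h).not_ge le_add_self

lemma xi_add_eq_xi_shift {t : ℕ} (ht : 0 < t) (hT : T 0 ω = t) (i : ℕ) :
    xi T (t + i) ω = xi (fun l => T (l + 1)) i ω := by
  have h : (∃ j, ∑ l ∈ Finset.range j, T l ω = ((t + i : ℕ) : ℕ∞)) ↔
      ∃ j, ∑ l ∈ Finset.range j, T (l + 1) ω = (i : ℕ∞) := by
    constructor
    · rintro ⟨_ | j, hj⟩
      · exact absurd hj (by rw [Finset.sum_range_zero]; exact_mod_cast (by omega : 0 ≠ t + i))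
      · rw [Finset.sum_range_succ', hT, add_comm, Nat.cast_add] at hj
        exact ⟨j, WithTop.add_left_cancel (ENat.natCast_ne_top t) hj⟩
    · rintro ⟨j, hj⟩
      exact ⟨j + 1, by rw [Finset.sum_range_succ', hT, hj, add_comm, Nat.cast_add]⟩
  simp only [xi, h]

lemma prod_pow_xi_of_T_zero_eq {t n : ℕ} (htn : t < n) (hT : T 0 ω = (t + 1 : ℕ))
    (γ : ℕ → ℝ) :
    ∏ j ∈ Finset.range n, γ j ^ xi T (j + 1) ω =
      γ t * ∏ j ∈ Finset.range (n - (t + 1)),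
        γ (j + t + 1) ^ xi (fun l => T (l + 1)) (j + 1) ω := by
  obtain ⟨m, rfl⟩ := Nat.exists_eq_add_of_lt htn
  have hbefore : ∀ j ∈ Finset.range t, γ j ^ xi T (j + 1) ω = 1 := fun j hj => by
    have hjt : (j + 1 : ℕ) < (t + 1 : ℕ) := Nat.succ_lt_succ (Finset.mem_range.1 hj)
    rw [xi_eq_zero_of_lt (Nat.succ_pos j) (hT ▸ Nat.cast_lt.2 hjt), pow_zero]
  have hat : xi T (t + 1) ω = 1 := by
    simpa [xi_zero] using xi_add_eq_xi_shift (Nat.succ_pos t) hT 0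
  have hafter : ∀ j, xi T (j + (t + 1) + 1) ω = xi (fun l => T (l + 1)) (j + 1) ω := fun j => by
    rw [← xi_add_eq_xi_shift (Nat.succ_pos t) hT, add_comm j, add_assoc]
  rw [show t + m + 1 - (t + 1) = m by omega, show t + m + 1 = t + 1 + m by omega,
    Finset.prod_range_add, Finset.prod_range_succ, Finset.prod_eq_one hbefore, hat, pow_one,
    one_mul]
  refine congrArg _ (Finset.prod_congr rfl fun j _ => ?_)
  rw [add_comm (t + 1) j, hafter, add_assoc]

lemma prod_pow_xi_of_lt {n : ℕ} (h : (n : ℕ∞) < T 0 ω) (γ : ℕ → ℝ) :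
    ∏ j ∈ Finset.range n, γ j ^ xi T (j + 1) ω = 1 :=
  Finset.prod_eq_one fun j hj => by
    rw [xi_eq_zero_of_lt (Nat.succ_pos j)
      ((Nat.cast_le.2 (Finset.mem_range.1 hj)).trans_lt h), pow_zero]

lemma prod_pow_xi_eq_sum (hT : 1 ≤ T 0 ω) (n : ℕ) (γ : ℕ → ℝ) :
    ∏ j ∈ Finset.range n, γ j ^ xi T (j + 1) ω =
      ∑ t ∈ Finset.range n, ({((t + 1 : ℕ) : ℕ∞)} : Set ℕ∞).indicator 1 (T 0 ω) *
          (γ t * ∏ j ∈ Finset.range (n - (t + 1)),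
            γ (j + t + 1) ^ xi (fun l => T (l + 1)) (j + 1) ω) +
        (Set.Ioi (n : ℕ∞)).indicator 1 (T 0 ω) := by
  rcases lt_or_ge (n : ℕ∞) (T 0 ω) with h | h
  · rw [prod_pow_xi_of_lt h, Set.indicator_of_mem (Set.mem_Ioi.2 h), Finset.sum_eq_zero,
      zero_add, Pi.one_apply]
    intro t ht
    rw [Set.indicator_of_notMem, zero_mul]
    rintro (hT : T 0 ω = _)
    rw [hT] at h
    exact absurd h (not_lt.2 (Nat.cast_le.2 (Finset.mem_range.1 ht)))
  · obtain ⟨m, hm⟩ := ENat.ne_top_iff_exists.1 (h.trans_lt (ENat.natCast_lt_top n)).ne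
    obtain ⟨t, rfl⟩ : ∃ t, m = t + 1 := Nat.exists_eq_succ_of_ne_zero (by
      rintro rfl; rw [← hm] at hT; exact absurd hT (by simp))
    have htn : t < n := by rw [← hm] at h; exact_mod_cast h
    rw [Finset.sum_eq_single t, Set.indicator_of_mem (hm.symm : T 0 ω ∈ _),
      Set.indicator_of_notMem (mt Set.mem_Ioi.1 h.not_gt), Pi.one_apply, one_mul, add_zero,
      prod_pow_xi_of_T_zero_eq htn hm.symm]
    · intro s _ hst
      rw [Set.indicator_of_notMem, zero_mul]
      rintro (hs : T 0 ω = _)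
      rw [← hm] at hs
      have := Nat.cast_inj.1 hs; omega
    · intro ht; exact absurd (Finset.mem_range.2 htn) ht

lemma norm_prod_pow_xi_le (T : ℕ → Ω → ℕ∞) (n : ℕ) (γ : ℕ → ℝ) (ω : Ω) :
    ‖∏ j ∈ Finset.range n, γ j ^ xi T (j + 1) ω‖ ≤ ∏ j ∈ Finset.range n, max 1 |γ j| := by
  rw [norm_prod]
  refine Finset.prod_le_prod (fun _ _ => norm_nonneg _) fun j _ => ?_
  rcases xi_eq_zero_or_one T (j + 1) ω with h | h <;> simp [h]

end renewal

section measure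

variable {T : ℕ → Ω → ℕ∞}

lemma measurable_xi (hT : ∀ j, Measurable (T j)) (i : ℕ) : Measurable (xi T i) := by
  refine Measurable.ite ?_ measurable_const measurable_const
  simp only [Set.ofPred_exists]
  exact MeasurableSet.iUnion fun j =>
    (Finset.measurable_sum _ fun l _ => hT l) (measurableSet_singleton _)

lemma measurable_prod_pow_xi (hT : ∀ j, Measurable (T j)) (n : ℕ) (γ : ℕ → ℝ) :
    Measurable (fun ω => ∏ j ∈ Finset.range n, γ j ^ xi T (j + 1) ω) :=
  Finset.measurable_prod _ fun j _ => measurable_const.pow (measurable_xi hT (j + 1))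

lemma integrable_prod_pow_xi {P : Measure Ω} [IsFiniteMeasure P] (hT : ∀ j, Measurable (T j))
    (n : ℕ) (γ : ℕ → ℝ) : Integrable (fun ω => ∏ j ∈ Finset.range n, γ j ^ xi T (j + 1) ω) P :=
  .of_bound (measurable_prod_pow_xi hT n γ).aestronglyMeasurable _
    (ae_of_all _ (norm_prod_pow_xi_le T n γ))

lemma integral_pow_xi (P : Measure Ω) [IsProbabilityMeasure P] (hT : ∀ j, Measurable (T j))
    (β : ℝ) (i : ℕ) : ∫ ω, β ^ xi T i ω ∂P = 1 - pxi P T i * (1 - β) := by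
  have hS : MeasurableSet {ω | xi T i ω = 1} := measurable_xi hT i (measurableSet_singleton 1)
  calc ∫ ω, β ^ xi T i ω ∂P = ∫ ω, (1 - (1 - β) * {ω | xi T i ω = 1}.indicator 1 ω) ∂P := by
        refine integral_congr_ae (ae_of_all _ fun ω => ?_)
        rcases xi_eq_zero_or_one T i ω with h | h <;> simp [Set.indicator, h]
    _ = 1 - pxi P T i * (1 - β) := by
        rw [integral_sub (integrable_const _) (((integrable_const 1).indicator hS).const_mul _),
          integral_const_mul, integral_indicator_one hS, integral_const, probReal_univ, smul_eq_mul,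
          pxi, measureReal_def]
        ring

end measure

lemma integral_indicator_one_comp {β : Type*} [MeasurableSpace β] {P : Measure Ω} {X : Ω → β}
    (hX : Measurable X) {s : Set β} (hs : MeasurableSet s) :
    ∫ ω, s.indicator 1 (X ω) ∂P = P.real (X ⁻¹' s) :=
  integral_indicator_one (hX hs)

lemma indepFun_zero_succ {β : Type*} [MeasurableSpace β] {P : Measure Ω} {X : ℕ → Ω → β}
    (hmeas : ∀ j, Measurable (X j)) (hX : iIndepFun X P) :
    IndepFun (X 0) (fun ω l => X (l + 1) ω) P := by
  rw [IndepFun_iff_Indep]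
  have key := indep_iSup_of_disjoint (fun i => (hmeas i).comap_le) hX.iIndep
    (S := {0}) (T := Set.Ioi 0) (by simp)
  refine indep_of_indep_of_le_right (indep_of_indep_of_le_left key ?_) ?_
  · exact le_iSup₂ (f := fun i (_ : i ∈ ({0} : Set ℕ)) => MeasurableSpace.comap (X i) _) 0 rfl
  · rw [MeasurableSpace.pi, MeasurableSpace.comap_iSup]
    refine iSup_le fun l => ?_
    rw [MeasurableSpace.comap_comp]
    exact le_iSup₂ (f := fun i (_ : i ∈ Set.Ioi 0) => MeasurableSpace.comap (X i) _) (l + 1)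
      (Nat.succ_pos l)

/-- The hypotheses on the inter-arrival times, in a form inherited by the shifted sequence
`fun l => T (l + 1)`. -/
structure IsRenewalArrivals (P : Measure Ω) (q : ℕ → ℝ) (T : ℕ → Ω → ℕ∞) : Prop where
  one_le : ∀ j ω, 1 ≤ T j ω
  measurable : ∀ j, Measurable (T j)
  indep : iIndepFun T P
  measureReal_eq : ∀ j m,
    P.real (T j ⁻¹' {((m + 1 : ℕ) : ℕ∞)}) = (1 - q m) * ∏ i ∈ Finset.range m, q i

namespace IsRenewalArrivals

variable {P : Measure Ω} {q : ℕ → ℝ} {T : ℕ → Ω → ℕ∞}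

lemma of_map_eq (hT1 : ∀ j ω, 1 ≤ T j ω) (hTmeas : ∀ j, Measurable (T j))
    (hTindep : iIndepFun T P) (hTident : ∀ j, Measure.map (T j) P = Measure.map (T 0) P)
    (hq₀ : ∀ i, 0 ≤ q i) (hq₁ : ∀ i, q i ≤ 1)
    (hTq : ∀ n : ℕ, 1 ≤ n → P {ω | T 0 ω = (n : ℕ∞)} =
      ENNReal.ofReal ((1 - q (n - 1)) * ∏ i ∈ Finset.range (n - 1), q i)) :
    IsRenewalArrivals P q T where
  one_le := hT1
  measurable := hTmeas
  indep := hTindep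
  measureReal_eq j m := by
    rw [measureReal_def, ← Measure.map_apply (hTmeas j) (.of_discrete), hTident j,
      Measure.map_apply (hTmeas 0) (.of_discrete)]
    change (P {ω | T 0 ω = ((m + 1 : ℕ) : ℕ∞)}).toReal = _
    rw [hTq (m + 1) m.succ_pos, Nat.add_sub_cancel, ENNReal.toReal_ofReal
      (mul_nonneg (sub_nonneg.2 (hq₁ m)) (Finset.prod_nonneg fun i _ => hq₀ i))]

lemma shift (hT : IsRenewalArrivals P q T) : IsRenewalArrivals P q (fun l => T (l + 1)) :=
  ⟨fun j => hT.one_le (j + 1), fun j => hT.measurable (j + 1),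
    hT.indep.precomp (add_left_injective 1), fun j => hT.measureReal_eq (j + 1)⟩

lemma integral_indicator_mul_shift (hT : IsRenewalArrivals P q T) (t : ℕ)
    {g : (ℕ → ℕ∞) → ℝ} (hg : Measurable g) :
    ∫ ω, ({((t + 1 : ℕ) : ℕ∞)} : Set ℕ∞).indicator 1 (T 0 ω) * g (fun l => T (l + 1) ω) ∂P =
      (1 - q t) * (∏ i ∈ Finset.range t, q i) * ∫ ω, g (fun l => T (l + 1) ω) ∂P := by
  have hind : Measurable (({((t + 1 : ℕ) : ℕ∞)} : Set ℕ∞).indicator (1 : ℕ∞ → ℝ)) := .of_discrete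
  rw [← hT.measureReal_eq 0 t, ← integral_indicator_one_comp (hT.measurable 0) (.of_discrete)]
  exact (indepFun_zero_succ hT.measurable hT.indep).integral_comp_mul_comp
    (hT.measurable 0).aemeasurable
    (measurable_pi_lambda _ fun l => hT.measurable (l + 1)).aemeasurable
    hind.aestronglyMeasurable hg.aestronglyMeasurable

variable [IsProbabilityMeasure P]

lemma measureReal_lt (hT : IsRenewalArrivals P q T) (j m : ℕ) :
    P.real (T j ⁻¹' Set.Ioi (m : ℕ∞)) = ∏ i ∈ Finset.range m, q i := by
  induction m with
  | zero =>
    have : T j ⁻¹' Set.Ioi 0 = Set.univ :=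
      Set.eq_univ_of_forall fun ω => (hT.one_le j ω).trans_lt' zero_lt_one
    rw [Nat.cast_zero, this, probReal_univ, Finset.prod_range_zero]
  | succ m ih =>
    have hsplit : T j ⁻¹' Set.Ioi (m : ℕ∞) =
        T j ⁻¹' {((m + 1 : ℕ) : ℕ∞)} ∪ T j ⁻¹' Set.Ioi ((m + 1 : ℕ) : ℕ∞) := by
      ext ω
      simp only [Set.mem_preimage, Set.mem_Ioi, Set.mem_union, Set.mem_singleton_iff,
        ← ENat.add_one_le_iff (ENat.natCast_ne_top m), le_iff_eq_or_lt, Nat.cast_succ, eq_comm]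
    have hdisj : Disjoint (T j ⁻¹' {((m + 1 : ℕ) : ℕ∞)}) (T j ⁻¹' Set.Ioi ((m + 1 : ℕ) : ℕ∞)) :=
      Set.disjoint_left.2 fun ω (h₁ : _ = _) (h₂ : _ < _) => h₂.ne' h₁
    rw [hsplit, measureReal_union hdisj (hT.measurable j (.of_discrete)),
      hT.measureReal_eq] at ih
    rw [Finset.prod_range_succ]
    linarith

theorem integral_prod_pow_xi (hT : IsRenewalArrivals P q T) (n : ℕ) (γ : ℕ → ℝ) :
    ∫ ω, ∏ j ∈ Finset.range n, γ j ^ xi T (j + 1) ω ∂P = ageMean q n 0 γ := by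
  induction n using Nat.strong_induction_on generalizing T γ with
  | _ n ih =>
  -- `ψ t` reads the shifted sequence through the coordinate process on `ℕ → ℕ∞`, so that the
  -- independence of `T 0` and `fun l => T (l + 1)` applies to it
  set ψ : ℕ → (ℕ → ℕ∞) → ℝ := fun t x => γ t * ∏ j ∈ Finset.range (n - (t + 1)),
    γ (j + t + 1) ^ xi (fun l (x : ℕ → ℕ∞) => x l) (j + 1) x
  have hterm : ∀ t ∈ Finset.range n,
      ∫ ω, ({((t + 1 : ℕ) : ℕ∞)} : Set ℕ∞).indicator 1 (T 0 ω) * ψ t (fun l => T (l + 1) ω) ∂P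
        = (1 - q t) * (∏ i ∈ Finset.range t, q i) *
          (γ t * ageMean q (n - (t + 1)) 0 (fun j => γ (j + t + 1))) := fun t ht => by
    rw [hT.integral_indicator_mul_shift t
      ((measurable_prod_pow_xi (fun l => measurable_pi_apply l) _ _).const_mul _),
      integral_const_mul]
    exact congrArg (_ * ·) (congrArg (γ t * ·) (ih _ (Nat.sub_lt
      (Nat.zero_lt_of_lt (Finset.mem_range.1 ht)) t.succ_pos) hT.shift _))
  have hint : ∀ t ∈ Finset.range n, Integrable (fun ω =>
      ({((t + 1 : ℕ) : ℕ∞)} : Set ℕ∞).indicator 1 (T 0 ω) * ψ t (fun l => T (l + 1) ω)) P :=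
    fun t _ => ((integrable_prod_pow_xi hT.shift.measurable _ _).const_mul (γ t)).bdd_mul
      ((measurable_one.indicator (measurableSet_singleton _)).comp
        (hT.measurable 0)).aestronglyMeasurable
      (c := 1) (ae_of_all _ fun ω => by unfold Set.indicator; split_ifs <;> simp)
  have htail : Integrable (fun ω => (Set.Ioi (n : ℕ∞)).indicator (1 : ℕ∞ → ℝ) (T 0 ω)) P :=
    (integrable_const 1).indicator (s := T 0 ⁻¹' Set.Ioi (n : ℕ∞)) (hT.measurable 0 (.of_discrete))
  calc ∫ ω, ∏ j ∈ Finset.range n, γ j ^ xi T (j + 1) ω ∂P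
      = ∫ ω, (∑ t ∈ Finset.range n,
          ({((t + 1 : ℕ) : ℕ∞)} : Set ℕ∞).indicator 1 (T 0 ω) * ψ t (fun l => T (l + 1) ω) +
          (Set.Ioi (n : ℕ∞)).indicator 1 (T 0 ω)) ∂P :=
        integral_congr_ae (ae_of_all _ fun ω => prod_pow_xi_eq_sum (hT.one_le 0 ω) n γ)
    _ = ageMean q n 0 γ := by
        rw [integral_add (integrable_finsetSum _ hint) htail, integral_finsetSum _ hint,
          Finset.sum_congr rfl hterm, integral_indicator_one_comp (hT.measurable 0) (.of_discrete),
          hT.measureReal_lt, ageMean_eq_sum]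
        simp only [zero_add]

theorem prod_integral_pow_xi_le (hT : IsRenewalArrivals P q T) (hq₀ : ∀ i, 0 ≤ q i)
    (hq₁ : ∀ i, q i ≤ 1) (hq : Monotone q) {α : ℕ → ℝ} (hα₀ : ∀ i, 0 ≤ α i) (hα₁ : ∀ i, α i ≤ 1)
    (n : ℕ) :
    ∏ i ∈ Finset.range n, ∫ ω, α i ^ xi T (i + 1) ω ∂P ≤
      ∫ ω, ∏ i ∈ Finset.range n, α i ^ xi T (i + 1) ω ∂P := by
  have hsingle₀ : ∀ i j, 0 ≤ (Pi.mulSingle i (α i) : ℕ → ℝ) j := fun i j => by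
    rcases eq_or_ne j i with rfl | h <;> simp [*, Pi.mulSingle_eq_of_ne]
  have hsingle₁ : ∀ i j, (Pi.mulSingle i (α i) : ℕ → ℝ) j ≤ 1 := fun i j => by
    rcases eq_or_ne j i with rfl | h <;> simp [*, Pi.mulSingle_eq_of_ne]
  calc ∏ i ∈ Finset.range n, ∫ ω, α i ^ xi T (i + 1) ω ∂P
      = ∏ i ∈ Finset.range n, ageMean q n 0 (Pi.mulSingle i (α i)) :=
        Finset.prod_congr rfl fun i hi => by
          rw [← hT.integral_prod_pow_xi]
          exact integral_congr_ae (ae_of_all _ fun ω => (prod_mulSingle_pow hi (α i)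
            fun j => xi T (j + 1) ω).symm)
    _ ≤ ageMean q n 0 (∏ i ∈ Finset.range n, Pi.mulSingle i (α i)) :=
        prod_ageMean_le_ageMean_prod hq₀ hq₁ hq _ hsingle₀ hsingle₁ n 0
    _ = ∫ ω, ∏ i ∈ Finset.range n, α i ^ xi T (i + 1) ω ∂P := by
        rw [← hT.integral_prod_pow_xi]
        refine integral_congr_ae (ae_of_all _ fun ω => Finset.prod_congr rfl fun j hj => ?_)
        rw [Finset.prod_apply, Finset.prod_pi_mulSingle, if_pos hj]

end IsRenewalArrivals

theorem fkg_monotone_renewal_general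
    {Ω : Type*} [MeasurableSpace Ω]
    (P : Measure Ω) [IsProbabilityMeasure P]
    (T : ℕ → Ω → ℕ∞)
    -- the inter-arrival times take values in {1,2,…} ∪ {∞}
    (hT1 : ∀ j ω, 1 ≤ T j ω)
    (hTmeas : ∀ j, Measurable (T j))
    -- the inter-arrival times are i.i.d.
    (hTindep : iIndepFun T P)
    (hTident : ∀ j, Measure.map (T j) P = Measure.map (T 0) P)
    -- the inter-arrival law is parametrized by q : P(T = n) = (1 - q_{n-1}) ∏_{i<n-1} q_i
    (q : ℕ → ℝ) (hq : ∀ i, 0 ≤ q i ∧ q i < 1)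
    (hTq : ∀ n : ℕ, 1 ≤ n →
      P {ω | T 0 ω = (n : ℕ∞)} =
        ENNReal.ofReal ((1 - q (n - 1)) * ∏ i ∈ Finset.range (n - 1), q i))
    (hqmono : Monotone q)
    (α : ℕ → ℝ) (hα0 : ∀ n, 0 ≤ α n) (hα1 : ∀ n, α n ≤ 1)
    (n : ℕ) :
    (∏ i ∈ Finset.range n, ∫ ω, α i ^ (xi T (i + 1) ω) ∂P ≤
      ∫ ω, ∏ i ∈ Finset.range n, α i ^ (xi T (i + 1) ω) ∂P) ∧
    (∀ i, ∫ ω, α i ^ (xi T (i + 1) ω) ∂P = 1 - pxi P T (i + 1) * (1 - α i)) := by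
  have hq₀ : ∀ i, 0 ≤ q i := fun i => (hq i).1
  have hq₁ : ∀ i, q i ≤ 1 := fun i => (hq i).2.le
  have hT := IsRenewalArrivals.of_map_eq hT1 hTmeas hTindep hTident hq₀ hq₁ hTq
  exact ⟨hT.prod_integral_pow_xi_le hq₀ hq₁ hqmono hα0 hα1 n,
    fun i => integral_pow_xi P hTmeas (α i) (i + 1)⟩

/-- **FKG inequality for monotone renewal.** If the parameters
`(q_i)` are nondecreasing and `α_i ∈ [0,1]`, then for every `n ≥ 1`,
`E[∏_{i=0}^{n-1} α_i^{ξ_{i+1}}] ≥ ∏_{i=0}^{n-1} E[α_i^{ξ_{i+1}}]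
  = ∏_{i=0}^{n-1} (1 - P(ξ_{i+1}=1)(1 - α_i))`. -/
theorem fkg_monotone_renewal
    {Ω : Type*} [MeasurableSpace Ω]
    (P : Measure Ω) [IsProbabilityMeasure P]
    (T : ℕ → Ω → ℕ∞)
    -- the inter-arrival times take values in {1,2,…} ∪ {∞}
    (hT1 : ∀ j ω, 1 ≤ T j ω)
    (hTmeas : ∀ j, Measurable (T j))
    -- the inter-arrival times are i.i.d.
    (hTindep : iIndepFun T P)
    (hTident : ∀ j, Measure.map (T j) P = Measure.map (T 0) P)
    -- the inter-arrival law is parametrized by q : P(T = n) = (1 - q_{n-1}) ∏_{i<n-1} q_i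
    (q : ℕ → ℝ) (hq : ∀ i, 0 ≤ q i ∧ q i < 1)
    (hTq : ∀ n : ℕ, 1 ≤ n →
      P {ω | T 0 ω = (n : ℕ∞)} =
        ENNReal.ofReal ((1 - q (n - 1)) * ∏ i ∈ Finset.range (n - 1), q i))
    (hqmono : Monotone q)
    (α : ℕ → ℝ) (hα0 : ∀ n, 0 ≤ α n) (hα1 : ∀ n, α n ≤ 1)
    (n : ℕ) (hn : 1 ≤ n) :
    (∏ i ∈ Finset.range n, ∫ ω, α i ^ (xi T (i + 1) ω) ∂P ≤
      ∫ ω, ∏ i ∈ Finset.range n, α i ^ (xi T (i + 1) ω) ∂P) ∧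
    (∀ i, ∫ ω, α i ^ (xi T (i + 1) ω) ∂P = 1 - pxi P T (i + 1) * (1 - α i)) :=
  fkg_monotone_renewal_general P T hT1 hTmeas hTindep hTident q hq hTq hqmono α hα0 hα1 n

end RenewalPerc
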